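/- arXiv:1205.2335 — 7 statements merged into one kernel-verified Lean document; each statement's English description precedes it below -/
import Mathlib

section
/- For E ⊆ [0,∞), the set Ĩ_E is nonempty if and only if 0 is an accumulation point of E and p⁺(E,0) = 1. -/
open Filter Set Topology ENNReal

/-- λ(E,0,h): the supremum of lengths of open subintervals of (0,h) disjoint from E. -/
noncomputable def lambda0 (E : Set ℝ) (h : ℝ) : ℝ :=
  sSup {l : ℝ | ∃ a b : ℝ, 0 ≤ a ∧ a ≤ b ∧ b ≤ h ∧ Set.Ioo a b ∩ E = ∅ ∧ l = b - a}

/-- p⁺(E,0): the right porosity of E at 0. -/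
noncomputable def porosity (E : Set ℝ) : ℝ :=
  Filter.limsup (fun h => lambda0 E h / h) (nhdsWithin 0 (Set.Ioi 0))

/-- 0 is an accumulation point of E (E ⊆ [0,∞), relative topology of [0,∞)). -/
def AccZero (E : Set ℝ) : Prop := ∀ ε > 0, ∃ x ∈ E, 0 < x ∧ x < ε

/-- (a,b) is a connected component of the exterior of E in [0,∞):
an open interval in [0,∞) disjoint from E, maximal with this property. -/
def IsCompExt (E : Set ℝ) (a b : ℝ) : Prop :=
  0 ≤ a ∧ a < b ∧ Set.Ioo a b ∩ E = ∅ ∧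
  ∀ c d : ℝ, 0 ≤ c → Set.Ioo a b ⊆ Set.Ioo c d → (c, d) ≠ (a, b) → Set.Ioo c d ∩ E ≠ ∅

/-- Membership in Ĩ_E. -/
def memIE (E : Set ℝ) (A : ℕ → ℝ × ℝ) : Prop :=
  (∀ n, 0 < (A n).1) ∧ (∀ n, IsCompExt E (A n).1 (A n).2) ∧
  Filter.Tendsto (fun n => (A n).1) Filter.atTop (nhds 0) ∧
  Filter.Tendsto (fun n => ((A n).2 - (A n).1) / (A n).2) Filter.atTop (nhds 1)

/-- Almost decreasing sequence: eventually nonincreasing. -/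
def AlmostDecr (τ : ℕ → ℝ) : Prop := ∀ᶠ n in Filter.atTop, τ (n + 1) ≤ τ n

/-- Membership in Ẽ₀^d: almost decreasing sequences in E∖{0} tending to 0. -/
def memE0d (E : Set ℝ) (τ : ℕ → ℝ) : Prop :=
  AlmostDecr τ ∧ Filter.Tendsto τ Filter.atTop (nhds 0) ∧ ∀ n, τ n ∈ E \ {0}

/-- Weak equivalence ≍ of sequences: c₁ aₙ ≤ γₙ ≤ c₂ aₙ for large n. -/
def SeqEquiv (a γ : ℕ → ℝ) : Prop :=
  ∃ c₁ c₂ : ℝ, 0 < c₁ ∧ 0 < c₂ ∧ ∀ᶠ n in Filter.atTop, c₁ * a n ≤ γ n ∧ γ n ≤ c₂ * a n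

/-- E is τ̃-strongly porous. -/
def StronglyPorousWrt (E : Set ℝ) (τ : ℕ → ℝ) : Prop :=
  ∃ A : ℕ → ℝ × ℝ, memIE E A ∧ SeqEquiv (fun n => (A n).1) τ

/-- E is completely strongly porous at 0. -/
def CSP (E : Set ℝ) : Prop := ∀ τ : ℕ → ℝ, memE0d E τ → StronglyPorousWrt E τ

/-- Membership in Ĩ_E^d: first coordinates almost decreasing. -/
def memIEd (E : Set ℝ) (A : ℕ → ℝ × ℝ) : Prop := memIE E A ∧ AlmostDecr (fun n => (A n).1)

/-- Membership in Ĩ_E^{sd}: first coordinates eventually strictly decreasing. -/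
def memIEsd (E : Set ℝ) (A : ℕ → ℝ × ℝ) : Prop :=
  memIE E A ∧ ∀ᶠ n in Filter.atTop, (A (n + 1)).1 < (A n).1

/-- The preorder Ã ⪯ L̃. -/
def Prec (A L : ℕ → ℝ × ℝ) : Prop :=
  ∃ N₁ : ℕ, ∃ f : ℕ → ℕ, ∀ n ≥ N₁, (A n).1 = (L (f n)).1

/-- L̃ is universal: every Ã ∈ Ĩ_E^d satisfies Ã ⪯ L̃. -/
def Universal (E : Set ℝ) (L : ℕ → ℝ × ℝ) : Prop :=
  ∀ A : ℕ → ℝ × ℝ, memIEd E A → Prec A L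

/-- M(L̃) = limsup lₙ/mₙ₊₁ (in [0,∞]). -/
noncomputable def Mq (L : ℕ → ℝ × ℝ) : ℝ≥0∞ :=
  Filter.limsup (fun n => ENNReal.ofReal ((L n).1 / (L (n + 1)).2)) Filter.atTop

/-- C(τ̃) = inf over {(aₙ,bₙ)} ∈ Ĩ_E with τₙ ≤ aₙ eventually of limsup aₙ/τₙ. -/
noncomputable def Cseq (E : Set ℝ) (τ : ℕ → ℝ) : ℝ≥0∞ :=
  ⨅ (A : ℕ → ℝ × ℝ) (_ : memIE E A ∧ ∀ᶠ n in Filter.atTop, τ n ≤ (A n).1),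
    Filter.limsup (fun n => ENNReal.ofReal ((A n).1 / τ n)) Filter.atTop

/-- C_E = sup over τ̃ ∈ Ẽ₀^d of C(τ̃). -/
noncomputable def CE (E : Set ℝ) : ℝ≥0∞ := ⨆ (τ : ℕ → ℝ) (_ : memE0d E τ), Cseq E τ

/-- E is uniformly strongly porous at 0. -/
def USP (E : Set ℝ) : Prop :=
  ∃ c : ℝ, 0 < c ∧ ∀ τ : ℕ → ℝ, memE0d E τ → ∃ A : ℕ → ℝ × ℝ, memIE E A ∧
    (∀ᶠ n in Filter.atTop, τ n ≤ (A n).1) ∧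
    Filter.limsup (fun n => ENNReal.ofReal ((A n).1 / τ n)) Filter.atTop ≤ ENNReal.ofReal c

/-!
A component `(a, b)` of the complement of `E` with `a / b` small is a gap in `(0, b)` of relative
length `1 - a / b`, so a sequence of such components shrinking to `0` forces `p⁺(E,0) = 1`; by
maximality each left endpoint is approached from below by points of `E`, and the right endpoints
then tend to `0` because they cannot lie beyond a point of `E`. Conversely, porosity `1` gives gaps
`(α, β) ⊆ (0, h)` of length almost `h`, hence with `α / β` small. Enlarging such a gap to the
component containing it, with endpoints the supremum of `E` below it and the infimum of `E` above
it, only decreases the ratio; these endpoints are positive and finite because `E` accumulates at `0`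
and has points beyond `h`.
-/

section lambda0

variable {E : Set ℝ} {h : ℝ}

lemma bddAbove_lambda0_set (E : Set ℝ) (h : ℝ) :
    BddAbove {l : ℝ | ∃ a b : ℝ, 0 ≤ a ∧ a ≤ b ∧ b ≤ h ∧ Set.Ioo a b ∩ E = ∅ ∧ l = b - a} := by
  refine ⟨h, ?_⟩
  rintro _ ⟨a, b, ha, -, hbh, -, rfl⟩
  linarith

lemma zero_mem_lambda0_set (E : Set ℝ) (hh : 0 ≤ h) :
    (0 : ℝ) ∈ {l : ℝ | ∃ a b : ℝ, 0 ≤ a ∧ a ≤ b ∧ b ≤ h ∧ Set.Ioo a b ∩ E = ∅ ∧ l = b - a} :=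
  ⟨0, 0, le_rfl, le_rfl, hh, by simp, by ring⟩

lemma sub_le_lambda0 {a b : ℝ} (ha : 0 ≤ a) (hab : a ≤ b) (hbh : b ≤ h)
    (hgap : Set.Ioo a b ∩ E = ∅) : b - a ≤ lambda0 E h :=
  le_csSup (bddAbove_lambda0_set E h) ⟨a, b, ha, hab, hbh, hgap, rfl⟩

lemma lambda0_nonneg (hh : 0 ≤ h) : 0 ≤ lambda0 E h :=
  le_csSup (bddAbove_lambda0_set E h) (zero_mem_lambda0_set E hh)

lemma lambda0_le (hh : 0 ≤ h) : lambda0 E h ≤ h := by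
  refine csSup_le ⟨0, zero_mem_lambda0_set E hh⟩ ?_
  rintro _ ⟨a, b, ha, -, hbh, -, rfl⟩
  linarith

lemma exists_gap_of_lt_lambda0 {c : ℝ} (hh : 0 ≤ h) (hc : c < lambda0 E h) :
    ∃ α β : ℝ, 0 ≤ α ∧ β ≤ h ∧ Set.Ioo α β ∩ E = ∅ ∧ c < β - α := by
  obtain ⟨_, ⟨α, β, hα, -, hβh, hgap, rfl⟩, hlt⟩ :=
    exists_lt_of_lt_csSup ⟨0, zero_mem_lambda0_set E hh⟩ hc
  exact ⟨α, β, hα, hβh, hgap, hlt⟩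

end lambda0

lemma porosity_eq_one_iff (E : Set ℝ) :
    porosity E = 1 ↔ ∀ c < 1, ∃ᶠ h in 𝓝[>] (0 : ℝ), c < lambda0 E h / h := by
  have hle : ∀ᶠ h in 𝓝[>] (0 : ℝ), lambda0 E h / h ≤ 1 := by
    filter_upwards [self_mem_nhdsWithin] with h (hh : 0 < h)
    exact div_le_one_of_le₀ (lambda0_le hh.le) hh.le
  have hge : ∀ᶠ h in 𝓝[>] (0 : ℝ), 0 ≤ lambda0 E h / h := by
    filter_upwards [self_mem_nhdsWithin] with h (hh : 0 < h)
    exact div_nonneg (lambda0_nonneg hh.le) hh.le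
  have hcobdd := isCoboundedUnder_le_of_eventually_le _ hge
  constructor
  · intro hpor c hc
    exact frequently_lt_of_lt_limsup hcobdd (hc.trans_eq hpor.symm)
  · intro hfreq
    refine le_antisymm (limsup_le_of_le hcobdd hle) (le_of_forall_lt_imp_le_of_dense fun c hc => ?_)
    exact le_limsup_of_frequently_le ((hfreq c hc).mono fun _ => le_of_lt)
      (isBoundedUnder_of_eventually_le hle)

namespace IsCompExt

variable {E : Set ℝ} {a b : ℝ}

lemma le_of_mem (hab : IsCompExt E a b) {x : ℝ} (hx : x ∈ E) (hax : a < x) : b ≤ x := by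
  by_contra! hxb
  exact (Set.eq_empty_iff_forall_notMem.mp hab.2.2.1) x ⟨⟨hax, hxb⟩, hx⟩

lemma exists_mem_Ioc (hab : IsCompExt E a b) {c : ℝ} (hc : 0 ≤ c) (hca : c < a) :
    ∃ x ∈ E, c < x ∧ x ≤ a := by
  have hne := hab.2.2.2 c b hc (Set.Ioo_subset_Ioo_left hca.le)
    (fun h => hca.ne (congrArg Prod.fst h))
  obtain ⟨x, ⟨hcx, hxb⟩, hx⟩ := Set.nonempty_iff_ne_empty.mpr hne
  exact ⟨x, hx, hcx, le_of_not_gt fun hax => (hab.le_of_mem hx hax).not_gt hxb⟩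

end IsCompExt

lemma exists_isCompExt_of_gap {E : Set ℝ} {α β p q : ℝ} (hp : p ∈ E) (hp0 : 0 < p)
    (hpα : p ≤ α) (hαβ : α < β) (hq : q ∈ E) (hβq : β ≤ q) (hgap : Set.Ioo α β ∩ E = ∅) :
    ∃ a b, p ≤ a ∧ a ≤ α ∧ β ≤ b ∧ IsCompExt E a b := by
  have hL : (E ∩ Set.Iic α).Nonempty := ⟨p, hp, hpα⟩
  have hR : (E ∩ Set.Ici β).Nonempty := ⟨q, hq, hβq⟩
  have hLbdd : BddAbove (E ∩ Set.Iic α) := ⟨α, fun _ hy => hy.2⟩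
  have hRbdd : BddBelow (E ∩ Set.Ici β) := ⟨β, fun _ hy => hy.2⟩
  have hpa : p ≤ sSup (E ∩ Set.Iic α) := le_csSup hLbdd ⟨hp, hpα⟩
  have haα : sSup (E ∩ Set.Iic α) ≤ α := csSup_le hL fun _ hy => hy.2
  have hβb : β ≤ sInf (E ∩ Set.Ici β) := le_csInf hR fun _ hy => hy.2
  set a := sSup (E ∩ Set.Iic α)
  set b := sInf (E ∩ Set.Ici β)
  have hab : a < b := by linarith
  have hgap' : Set.Ioo a b ∩ E = ∅ := by
    refine Set.eq_empty_iff_forall_notMem.mpr ?_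
    rintro x ⟨⟨hax, hxb⟩, hx⟩
    rcases le_or_gt x α with hxα | hαx
    · exact (le_csSup hLbdd ⟨hx, hxα⟩).not_gt hax
    rcases lt_or_ge x β with hxβ | hβx
    · exact (Set.eq_empty_iff_forall_notMem.mp hgap) x ⟨⟨hαx, hxβ⟩, hx⟩
    · exact (csInf_le hRbdd ⟨hx, hβx⟩).not_gt hxb
  refine ⟨a, b, hpa, haα, hβb, by linarith, hab, hgap', ?_⟩
  intro c d _ hsub hne hcd
  obtain ⟨hca, hbd⟩ := (Set.Ioo_subset_Ioo_iff hab).mp hsub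
  have hmem : ∀ y ∈ E, c < y → y < d → False := fun y hy hcy hyd =>
    (Set.eq_empty_iff_forall_notMem.mp hcd) y ⟨⟨hcy, hyd⟩, hy⟩
  rcases hca.lt_or_eq with hca | rfl
  · obtain ⟨y, ⟨hy, hyα⟩, hcy⟩ := exists_lt_of_lt_csSup hL hca
    exact hmem y hy hcy ((le_csSup hLbdd ⟨hy, hyα⟩).trans_lt (hab.trans_le hbd))
  · have hbd : b < d := hbd.lt_of_ne fun h => hne (by rw [h])
    obtain ⟨y, ⟨hy, hβy : β ≤ y⟩, hyd⟩ := exists_lt_of_csInf_lt hR hbd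
    exact hmem y hy (by linarith) hyd

namespace memIE

variable {E : Set ℝ} {A : ℕ → ℝ × ℝ}

lemma accZero (hA : memIE E A) : AccZero E := by
  intro ε hε
  obtain ⟨n, hn⟩ := (hA.2.2.1.eventually (eventually_lt_nhds hε)).exists
  obtain ⟨x, hx, hx0, hxa⟩ := (hA.2.1 n).exists_mem_Ioc le_rfl (hA.1 n)
  exact ⟨x, hx, hx0, hxa.trans_lt hn⟩

lemma tendsto_snd (hA : memIE E A) : Tendsto (fun n => (A n).2) atTop (𝓝[>] 0) := by
  have hpos : ∀ n, 0 < (A n).2 := fun n => (hA.1 n).trans (hA.2.1 n).2.1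
  refine tendsto_nhdsWithin_iff.mpr ⟨tendsto_order.mpr ⟨fun c hc => ?_, fun ε hε => ?_⟩,
    Eventually.of_forall hpos⟩
  · exact Eventually.of_forall fun n => hc.trans (hpos n)
  · obtain ⟨x, hx, hx0, hxε⟩ := hA.accZero ε hε
    filter_upwards [hA.2.2.1.eventually (eventually_lt_nhds hx0)] with n hn
    exact ((hA.2.1 n).le_of_mem hx hn).trans_lt hxε

lemma porosity_eq_one (hA : memIE E A) : porosity E = 1 := by
  refine (porosity_eq_one_iff E).mpr fun c hc => hA.tendsto_snd.frequently ?_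
  refine ((hA.2.2.2.eventually (eventually_gt_nhds hc)).mono fun n hn => ?_).frequently
  obtain ⟨ha, hab, hgap, -⟩ := hA.2.1 n
  exact hn.trans_le (div_le_div_of_nonneg_right (sub_le_lambda0 ha hab.le le_rfl hgap)
    (ha.trans hab.le))

end memIE

lemma exists_isCompExt_lt_of_porosity_eq_one {E : Set ℝ} (hacc : AccZero E)
    (hpor : porosity E = 1) {ε : ℝ} (hε : 0 < ε) (hε1 : ε < 1) :
    ∃ a b, IsCompExt E a b ∧ 0 < a ∧ a < ε ∧ a < ε * b := by
  obtain ⟨q, hq, hq0, -⟩ := hacc 1 one_pos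
  obtain ⟨h, hlam, hh0, hh⟩ := (((porosity_eq_one_iff E).mp hpor (1 - ε) (by linarith)).and_eventually
    (Ioo_mem_nhdsGT (lt_min one_pos hq0))).exists
  have hlam : (1 - ε) * h < lambda0 E h := (lt_div_iff₀ hh0).mp hlam
  obtain ⟨α, β, hα, hβh, hgap, hlen⟩ := exists_gap_of_lt_lambda0 hh0.le hlam
  have hαβ : α < β := by nlinarith
  -- `β - α > (1 - ε) h ≥ (1 - ε) β`
  have hαε : α < ε * β := by nlinarith
  obtain ⟨p, hp, hp0, hpmid⟩ := hacc ((α + β) / 2) (by linarith)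
  have hpα : p ≤ α := le_of_not_gt fun hαp =>
    (Set.eq_empty_iff_forall_notMem.mp hgap) p ⟨⟨hαp, by linarith⟩, hp⟩
  obtain ⟨a, b, hpa, haα, hβb, hcomp⟩ := exists_isCompExt_of_gap hp hp0 hpα hαβ hq
    (by linarith [min_le_right 1 q]) hgap
  refine ⟨a, b, hcomp, hp0.trans_le hpa, ?_, ?_⟩
  · nlinarith [min_le_left 1 q]
  · nlinarith

lemma exists_memIE_of_accZero_of_porosity_eq_one {E : Set ℝ} (hacc : AccZero E) (hpor : porosity E = 1) :
    ∃ A : ℕ → ℝ × ℝ, memIE E A := by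
  obtain ⟨ε, -, hε, hε0⟩ := exists_seq_strictAnti_tendsto' (zero_lt_one' ℝ)
  choose a b hcomp ha0 haε habε using fun n =>
    exists_isCompExt_lt_of_porosity_eq_one hacc hpor (hε n).1 (hε n).2
  have hb0 : ∀ n, 0 < b n := fun n => (ha0 n).trans (hcomp n).2.1
  have hratio : Tendsto (fun n => a n / b n) atTop (𝓝 0) :=
    squeeze_zero (fun n => div_nonneg (ha0 n).le (hb0 n).le)
      (fun n => ((div_lt_iff₀ (hb0 n)).mpr (habε n)).le) hε0
  refine ⟨fun n => (a n, b n), ha0, hcomp, squeeze_zero (fun n => (ha0 n).le)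
    (fun n => (haε n).le) hε0, ?_⟩
  have hsub : (fun n => (b n - a n) / b n) = fun n => 1 - a n / b n := by
    funext n
    rw [sub_div, div_self (hb0 n).ne']
  simpa [hsub] using (tendsto_const_nhds (x := (1 : ℝ))).sub hratio

theorem stmt1_general (E : Set ℝ) :
    (∃ A : ℕ → ℝ × ℝ, memIE E A) ↔ (AccZero E ∧ porosity E = 1) :=
  ⟨fun ⟨_, hA⟩ => ⟨hA.accZero, hA.porosity_eq_one⟩,
    fun ⟨hacc, hpor⟩ => exists_memIE_of_accZero_of_porosity_eq_one hacc hpor⟩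

theorem stmt1 (E : Set ℝ) (hE : E ⊆ Set.Ici 0) :
    (∃ A : ℕ → ℝ × ℝ, memIE E A) ↔ (AccZero E ∧ porosity E = 1) :=
  stmt1_general E
end

section
/- Let E ⊆ [0,∞), let γ̃ = {γₙ} be an almost decreasing sequence in E∖{0} with γₙ → 0, and let {(aₙ,bₙ)} ∈ Ĩ_E with ã = {aₙ}. Then γ̃ ≍ ã (i.e., there exist constants c₁,c₂ > 0 with c₁aₙ ≤ γₙ ≤ c₂aₙ for sufficiently large n) if and only if limsup_{n→∞} aₙ/γₙ < ∞ and γₙ ≤ aₙ for sufficiently large n. -/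
/-!
If `γₙ ≤ c₂ aₙ`, then `γₙ < bₙ` as soon as `aₙ / bₙ < 1 / c₂`, which holds eventually because
`bₙ / aₙ → ∞`. Since `γₙ ∈ E` and `(aₙ, bₙ)` misses `E`, this forces `γₙ ≤ aₙ`. Conversely, a
finite `limsup aₙ / γₙ` bounds `aₙ` by a multiple of `γₙ`, and `γₙ ≤ aₙ` gives the other bound.
-/

open Filter Set Topology ENNReal

theorem ENNReal.limsup_ofReal_lt_top_iff {α : Type*} {l : Filter α} {u : α → ℝ} :
    limsup (fun x => ENNReal.ofReal (u x)) l < ⊤ ↔ IsBoundedUnder (· ≤ ·) l u := by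
  constructor
  · intro h
    obtain ⟨c, hlim, hc⟩ := exists_between h
    refine ⟨c.toReal, (eventually_lt_of_limsup_lt hlim).mono fun x hx => ?_⟩
    exact (ENNReal.ofReal_le_iff_le_toReal hc.ne).1 hx.le
  · rintro ⟨C, hC⟩
    refine (limsup_le_of_le (by isBoundedDefault) ?_).trans_lt (ofReal_lt_top (r := C))
    exact hC.mono fun x hx => ENNReal.ofReal_le_ofReal hx

theorem seqEquiv_iff_isBoundedUnder_div {a γ : ℕ → ℝ} (ha : ∀ n, 0 < a n) (hγ : ∀ n, 0 < γ n) :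
    SeqEquiv a γ ↔ IsBoundedUnder (· ≤ ·) atTop (fun n => a n / γ n) ∧
      IsBoundedUnder (· ≤ ·) atTop (fun n => γ n / a n) := by
  constructor
  · rintro ⟨c₁, c₂, hc₁, -, h⟩
    refine ⟨isBoundedUnder_of_eventually_le (a := c₁⁻¹) (h.mono fun n hn => ?_),
      isBoundedUnder_of_eventually_le (a := c₂) (h.mono fun n hn => ?_)⟩
    · rw [div_le_iff₀ (hγ n), ← div_eq_inv_mul, le_div_iff₀ hc₁, mul_comm]
      exact hn.1
    · exact (div_le_iff₀ (ha n)).2 hn.2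
  · rintro ⟨⟨C₁, hC₁⟩, ⟨C₂, hC₂⟩⟩
    refine ⟨(max C₁ 1)⁻¹, max C₂ 1, by positivity, by positivity, ?_⟩
    filter_upwards [hC₁, hC₂] with n h₁ h₂
    constructor
    · rw [← div_eq_inv_mul, div_le_iff₀ (by positivity), mul_comm, ← div_le_iff₀ (hγ n)]
      exact h₁.trans (le_max_left _ _)
    · exact (div_le_iff₀ (ha n)).1 (h₂.trans (le_max_left _ _))

theorem tendsto_div_zero_of_tendsto_sub_div_one {α : Type*} {l : Filter α} {a b : α → ℝ}
    (hb : ∀ᶠ x in l, b x ≠ 0) (h : Tendsto (fun x => (b x - a x) / b x) l (𝓝 1)) :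
    Tendsto (fun x => a x / b x) l (𝓝 0) := by
  have h' := (tendsto_const_nhds (x := (1 : ℝ))).sub h
  rw [sub_self] at h'
  refine h'.congr' (hb.mono fun x hx => ?_)
  rw [sub_div, div_self hx]
  ring

theorem eventually_le_of_isBoundedUnder_div_of_gap {E : Set ℝ} {a b γ : ℕ → ℝ}
    (ha : ∀ n, 0 < a n) (hlt : ∀ n, a n < b n) (hgap : ∀ n, Ioo (a n) (b n) ∩ E = ∅)
    (hγ : ∀ n, γ n ∈ E)
    (hab : Tendsto (fun n => a n / b n) atTop (𝓝 0))
    (hbdd : IsBoundedUnder (· ≤ ·) atTop (fun n => γ n / a n)) :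
    ∀ᶠ n in atTop, γ n ≤ a n := by
  obtain ⟨C, hC⟩ := hbdd
  have hsmall : ∀ᶠ n in atTop, a n / b n < (max C 1)⁻¹ :=
    hab.eventually (gt_mem_nhds (by positivity))
  filter_upwards [hC, hsmall] with n hn hs
  have hb : 0 < b n := (ha n).trans (hlt n)
  have hγb : γ n < b n :=
    calc γ n ≤ max C 1 * a n := (div_le_iff₀ (ha n)).1 (hn.trans (le_max_left _ _))
      _ < b n := by
        rwa [div_lt_iff₀ hb, ← div_eq_inv_mul, lt_div_iff₀ (by positivity), mul_comm] at hs
  by_contra! h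
  exact (Set.eq_empty_iff_forall_notMem.1 (hgap n)) (γ n) ⟨⟨h, hγb⟩, hγ n⟩

theorem stmt2 (E : Set ℝ) (hE : E ⊆ Set.Ici 0) (γ : ℕ → ℝ) (hγ : memE0d E γ)
    (A : ℕ → ℝ × ℝ) (hA : memIE E A) :
    SeqEquiv (fun n => (A n).1) γ ↔
      (Filter.limsup (fun n => ENNReal.ofReal ((A n).1 / γ n)) Filter.atTop < ⊤ ∧
        ∀ᶠ n in Filter.atTop, γ n ≤ (A n).1) := by
  obtain ⟨-, -, hmem⟩ := hγ
  obtain ⟨hpos, hcomp, -, hratio⟩ := hA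
  have hγpos : ∀ n, 0 < γ n := fun n => (hE (hmem n).1).lt_of_ne' (hmem n).2
  have hab : Tendsto (fun n => (A n).1 / (A n).2) atTop (𝓝 0) :=
    tendsto_div_zero_of_tendsto_sub_div_one
      (Eventually.of_forall fun n => ((hpos n).trans (hcomp n).2.1).ne') hratio
  rw [seqEquiv_iff_isBoundedUnder_div hpos hγpos, ENNReal.limsup_ofReal_lt_top_iff]
  refine and_congr_right fun _ => ⟨fun hbdd => ?_, fun hle => ?_⟩
  · exact eventually_le_of_isBoundedUnder_div_of_gap hpos (fun n => (hcomp n).2.1)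
      (fun n => (hcomp n).2.2.1) (fun n => (hmem n).1) hab hbdd
  · exact ⟨1, hle.mono fun n hn => (div_le_one (hpos n)).2 hn⟩
end

section
/- Let E ⊆ [0,∞) and let τ̃ = {τₙ} be an almost decreasing sequence in E∖{0} with τₙ → 0. Then E is τ̃-strongly porous if and only if there exists a constant k ∈ (1,∞) such that for every K ∈ (k,∞) there is N₁(K) ∈ ℕ with (kτₙ, Kτₙ) ∩ E = ∅ for all n ≥ N₁(K). -/
open Filter Set Topology ENNReal

theorem stmt3 (E : Set ℝ) (hE : E ⊆ Set.Ici 0) (τ : ℕ → ℝ) (hτ : memE0d E τ) :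
    StronglyPorousWrt E τ ↔
      ∃ k : ℝ, 1 < k ∧ ∀ K : ℝ, k < K → ∃ N₁ : ℕ, ∀ n ≥ N₁,
        Set.Ioo (k * τ n) (K * τ n) ∩ E = ∅ := by
  obtain ⟨hdecr, hτ0, hτE⟩ := hτ
  have hτpos : ∀ n, 0 < τ n := fun n => lt_of_le_of_ne (hE (hτE n).1) (Ne.symm (hτE n).2)
  constructor
  · rintro ⟨A, ⟨hpos, hcomp, ha0, hratio⟩, c₁, c₂, hc₁, hc₂, heq⟩
    set a : ℕ → ℝ := fun n => (A n).1 with hadef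
    set b : ℕ → ℝ := fun n => (A n).2 with hbdef
    have hab : ∀ n, a n < b n := fun n => (hcomp n).2.1
    have hbpos : ∀ n, 0 < b n := fun n => (hpos n).trans (hab n)
    have hIoo : ∀ n, Set.Ioo (a n) (b n) ∩ E = ∅ := fun n => (hcomp n).2.2.1
    have hdiv : Tendsto (fun n => a n / b n) atTop (nhds 0) := by
      have h1 : Tendsto (fun n => 1 - (b n - a n) / b n) atTop (nhds (1 - 1)) :=
        tendsto_const_nhds.sub hratio
      have h2 : (fun n => 1 - (b n - a n) / b n) = fun n => a n / b n := by
        funext n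
        rw [sub_div, div_self (hbpos n).ne']
        ring
      have h3 : (1:ℝ) - 1 = 0 := by norm_num
      rwa [h2, h3] at h1
    have hk1 : (1:ℝ) < 2 + 2 / c₁ := by
      have := div_pos two_pos hc₁; linarith
    refine ⟨2 + 2 / c₁, hk1, ?_⟩
    intro K hK
    have hKpos : 0 < K := by linarith
    have hev1 : ∀ᶠ n in atTop, a n / b n < 1 / (K * c₂) :=
      hdiv.eventually_lt_const (by positivity)
    obtain ⟨N, hN⟩ := eventually_atTop.mp (heq.and hev1)
    refine ⟨N, fun n hn => ?_⟩
    obtain ⟨⟨h1, h2⟩, h3⟩ := hN n hn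
    rw [div_lt_div_iff₀ (hbpos n) (by positivity), one_mul] at h3
    have hsub : Set.Ioo ((2 + 2 / c₁) * τ n) (K * τ n) ⊆ Set.Ioo (a n) (b n) := by
      rintro x ⟨hx1, hx2⟩
      constructor
      · have hkc : (2 + 2 / c₁) * c₁ = 2 * c₁ + 2 := by field_simp
        nlinarith [hpos n, hτpos n]
      · nlinarith [hpos n, hτpos n]
    have h0 := hIoo n
    rw [Set.eq_empty_iff_forall_notMem] at h0 ⊢
    rintro x ⟨hx, hxE⟩
    exact h0 x ⟨hsub hx, hxE⟩
  · rintro ⟨k, hk1, hgap⟩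
    have hkpos : (0:ℝ) < k := by linarith
    set a : ℕ → ℝ := fun n => sSup (E ∩ Set.Icc 0 (k * τ n)) with hadef
    set b : ℕ → ℝ := fun n => sInf (E ∩ Set.Ioi (a n)) with hbdef
    have hmemS : ∀ n, τ n ∈ E ∩ Set.Icc 0 (k * τ n) := fun n =>
      ⟨(hτE n).1, (hτpos n).le, by nlinarith [hτpos n]⟩
    have hbddS : ∀ n, BddAbove (E ∩ Set.Icc 0 (k * τ n)) := fun n =>
      ⟨k * τ n, fun x hx => hx.2.2⟩
    have hτa : ∀ n, τ n ≤ a n := fun n => le_csSup (hbddS n) (hmemS n)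
    have hak : ∀ n, a n ≤ k * τ n := fun n => csSup_le ⟨τ n, hmemS n⟩ (fun x hx => hx.2.2)
    have hapos : ∀ n, 0 < a n := fun n => lt_of_lt_of_le (hτpos n) (hτa n)
    have hIooE : ∀ n, Set.Ioo (a n) (b n) ∩ E = ∅ := by
      intro n
      rw [Set.eq_empty_iff_forall_notMem]
      rintro x ⟨⟨hax, hxb⟩, hxE⟩
      exact absurd (csInf_le (s := E ∩ Set.Ioi (a n)) ⟨a n, fun y hy => hy.2.le⟩ ⟨hxE, hax⟩) (not_le.2 hxb)
    have hkey : ∀ K, k < K → ∀ᶠ n in atTop, ∀ x ∈ E, a n < x → K * τ n ≤ x := by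
      intro K hK
      obtain ⟨N₁, hN₁⟩ := hgap K hK
      filter_upwards [eventually_ge_atTop N₁] with n hn x hxE hax
      by_contra hlt
      push_neg at hlt
      rcases le_or_gt x (k * τ n) with h | h
      · exact absurd (le_csSup (hbddS n) ⟨hxE, hE hxE, h⟩) (not_le.2 hax)
      · have h0 := hN₁ n hn
        rw [Set.eq_empty_iff_forall_notMem] at h0
        exact h0 x ⟨⟨h, hlt⟩, hxE⟩
    have hne : ∀ᶠ n in atTop, (E ∩ Set.Ioi (a n)).Nonempty := by
      have h0 : ∀ᶠ n in atTop, τ n < τ 0 / k :=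
        hτ0.eventually_lt_const (div_pos (hτpos 0) hkpos)
      filter_upwards [h0] with n hn
      refine ⟨τ 0, (hτE 0).1, lt_of_le_of_lt (hak n) ?_⟩
      rw [lt_div_iff₀ hkpos] at hn; nlinarith
    -- bound for b in terms of K (eventually)
    have hbK : ∀ K, k < K → ∀ᶠ n in atTop, K * τ n ≤ b n := by
      intro K hK
      filter_upwards [hkey K hK, hne] with n h1 h2
      exact le_csInf h2 (fun x hx => h1 x hx.1 hx.2)
    obtain ⟨N, hN⟩ := eventually_atTop.mp ((hbK (k + 1) (by linarith)).and hne)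
    set m : ℕ → ℕ := fun n => max n N with hmdef
    have hmN : ∀ n, N ≤ m n := fun n => le_max_right n N
    have hmTop : Tendsto m atTop atTop :=
      tendsto_atTop_mono (fun n => le_max_left n N) tendsto_id
    have hbk1 : ∀ n, (k + 1) * τ (m n) ≤ b (m n) := fun n => (hN (m n) (hmN n)).1
    have hnem : ∀ n, (E ∩ Set.Ioi (a (m n))).Nonempty := fun n => (hN (m n) (hmN n)).2
    have habm : ∀ n, a (m n) < b (m n) := fun n =>
      lt_of_le_of_lt (hak (m n)) (lt_of_lt_of_le (by nlinarith [hτpos (m n)]) (hbk1 n))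
    have hbposm : ∀ n, 0 < b (m n) := fun n => (hapos (m n)).trans (habm n)
    refine ⟨fun n => (a (m n), b (m n)), ⟨fun n => hapos (m n), ?_, ?_, ?_⟩, ?_⟩
    · -- IsCompExt
      intro n
      refine ⟨(hapos (m n)).le, habm n, hIooE (m n), ?_⟩
      intro c d hc hsub hne'
      obtain ⟨hca, hbd⟩ := (Set.Ioo_subset_Ioo_iff (habm n)).1 hsub
      have hcd : c < a (m n) ∨ b (m n) < d := by
        by_contra h
        push_neg at h
        exact hne' (by
          have h1 : c = a (m n) := le_antisymm hca h.1
          have h2 : d = b (m n) := le_antisymm h.2 hbd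
          rw [h1, h2])
      rcases hcd with hlt | hlt
      · obtain ⟨x, hxS, hcx⟩ := exists_lt_of_lt_csSup (s := E ∩ Set.Icc 0 (k * τ (m n))) ⟨τ (m n), hmemS (m n)⟩ hlt
        have hxa : x ≤ a (m n) := le_csSup (hbddS (m n)) hxS
        exact Set.nonempty_iff_ne_empty.mp
          ⟨x, ⟨hcx, lt_of_le_of_lt hxa (lt_of_lt_of_le (habm n) hbd)⟩, hxS.1⟩
      · obtain ⟨x, hxS, hxd⟩ := exists_lt_of_csInf_lt (hnem n) hlt
        exact Set.nonempty_iff_ne_empty.mp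
          ⟨x, ⟨lt_of_le_of_lt hca hxS.2, hxd⟩, hxS.1⟩
    · -- a ∘ m → 0
      have hkm : Tendsto (fun n => k * τ (m n)) atTop (nhds 0) := by
        have := (hτ0.comp hmTop).const_mul k
        simpa using this
      exact squeeze_zero (fun n => (hapos (m n)).le) (fun n => hak (m n)) hkm
    · -- ratio → 1
      have hdiv : Tendsto (fun n => a (m n) / b (m n)) atTop (nhds 0) := by
        rw [tendsto_order]
        constructor
        · intro x hx
          exact Filter.Eventually.of_forall fun n =>
            lt_of_lt_of_le hx (div_nonneg (hapos (m n)).le (hbposm n).le)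
        · intro ε hε
          have hK : k < max (k + 1) (2 * k / ε) := lt_of_lt_of_le (by linarith) (le_max_left _ _)
          set K := max (k + 1) (2 * k / ε) with hKdef
          have hKpos : 0 < K := by positivity
          obtain ⟨N₂, hN₂⟩ := eventually_atTop.mp (hbK K hK)
          filter_upwards [eventually_ge_atTop N₂] with n hn
          have hmn : N₂ ≤ m n := le_trans hn (le_max_left n N)
          have hb : K * τ (m n) ≤ b (m n) := hN₂ (m n) hmn
          have h1 : a (m n) / b (m n) ≤ k * τ (m n) / (K * τ (m n)) :=
            div_le_div₀ (mul_nonneg hkpos.le (hτpos (m n)).le) (hak (m n)) (mul_pos hKpos (hτpos (m n))) hb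
          have h2 : k * τ (m n) / (K * τ (m n)) = k / K :=
            mul_div_mul_right k K (hτpos (m n)).ne'
          have h3 : k / K < ε := by
            rw [div_lt_iff₀ hKpos]
            have h4 : 2 * k / ε ≤ K := le_max_right _ _
            have h5 : ε * (2 * k / ε) = 2 * k := by field_simp
            nlinarith [mul_le_mul_of_nonneg_left h4 hε.le]
          calc a (m n) / b (m n) ≤ k / K := h1.trans_eq h2
            _ < ε := h3
      have h1 : Tendsto (fun n => 1 - a (m n) / b (m n)) atTop (nhds (1 - 0)) :=
        tendsto_const_nhds.sub hdiv
      have h2 : (fun n => (b (m n) - a (m n)) / b (m n)) = fun n => 1 - a (m n) / b (m n) := by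
        funext n
        rw [sub_div, div_self (hbposm n).ne']
      have h3 : (1:ℝ) - 0 = 1 := by norm_num
      rw [h2]
      rwa [h3] at h1
    · -- SeqEquiv
      refine ⟨1 / k, 1, by positivity, one_pos, ?_⟩
      filter_upwards [eventually_ge_atTop N] with n hn
      have hmn : m n = n := max_eq_left hn
      simp only [hmn]
      constructor
      · rw [one_div_mul_eq_div, div_le_iff₀ hkpos]
        nlinarith [hak n]
      · rw [one_mul]; exact hτa n
end

section
/- Let E ⊆ [0,∞), let τ̃ = {τₙ} be an almost decreasing sequence in E∖{0} with τₙ → 0, and let {(aₙ,bₙ)} ∈ Ĩ_E with ã ≍ τ̃. Then the sequences {aₙ} and {bₙ} are both almost decreasing. -/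
open Filter Set Topology ENNReal

namespace IsCompExt

variable {E : Set ℝ} {a b a' b' : ℝ}

lemma snd_le_snd_of_fst_le (h : IsCompExt E a b) (h' : IsCompExt E a' b') (ha : a ≤ a') :
    b ≤ b' := by
  by_contra! hb
  exact h'.2.2.2 a b h.1 (Ioo_subset_Ioo ha hb.le)
    (fun he => hb.ne (Prod.ext_iff.1 he).2.symm) h.2.2.1

lemma snd_le_fst_of_fst_lt (h : IsCompExt E a b) (h' : IsCompExt E a' b') (ha : a < a') :
    b ≤ a' := by
  by_contra! hb
  have hbb' : b ≤ b' := h.snd_le_snd_of_fst_le h' ha.le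
  have hunion : Ioo a b' ∩ E = ∅ := by
    refine eq_empty_of_forall_notMem fun x ⟨hx, hxE⟩ => ?_
    rcases lt_or_ge x b with hxb | hxb
    · exact (eq_empty_iff_forall_notMem.1 h.2.2.1) x ⟨⟨hx.1, hxb⟩, hxE⟩
    · exact (eq_empty_iff_forall_notMem.1 h'.2.2.1) x ⟨⟨hb.trans_le hxb, hx.2⟩, hxE⟩
  exact h'.2.2.2 a b' h.1 (Ioo_subset_Ioo_left ha.le)
    (fun he => ha.ne (Prod.ext_iff.1 he).1) hunion

end IsCompExt

lemma memIE.tendsto_fst_div_snd {E : Set ℝ} {A : ℕ → ℝ × ℝ} (hA : memIE E A) :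
    Tendsto (fun n => (A n).1 / (A n).2) atTop (𝓝 0) := by
  have hsub : (fun n => (A n).1 / (A n).2) = fun n => 1 - ((A n).2 - (A n).1) / (A n).2 := by
    funext n
    have hb : (A n).2 ≠ 0 := ((hA.1 n).trans (hA.2.1 n).2.1).ne'
    field_simp
    ring
  simpa [hsub] using (tendsto_const_nhds (x := (1 : ℝ))).sub hA.2.2.2

/-- If `aₙ < aₙ₊₁` then `bₙ ≤ aₙ₊₁`, so `c₁ bₙ ≤ c₁ aₙ₊₁ ≤ τₙ₊₁ ≤ τₙ ≤ c₂ aₙ`; this is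
impossible once `aₙ / bₙ < c₁ / c₂`, which holds eventually since `bₙ / aₙ → ∞`. -/
lemma memIE.almostDecr_fst {E : Set ℝ} {A : ℕ → ℝ × ℝ} {τ : ℕ → ℝ} (hA : memIE E A)
    (hτ : AlmostDecr τ) (heq : SeqEquiv (fun n => (A n).1) τ) :
    AlmostDecr fun n => (A n).1 := by
  obtain ⟨c₁, c₂, hc₁, hc₂, hcc⟩ := heq
  have hsmall : ∀ᶠ n in atTop, (A n).1 / (A n).2 < c₁ / c₂ :=
    hA.tendsto_fst_div_snd.eventually_lt_const (div_pos hc₁ hc₂)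
  filter_upwards [hτ, hcc, (tendsto_add_atTop_nat 1).eventually hcc, hsmall]
    with n hτn hccn hccn' hsmalln
  by_contra! hlt
  have hbn : 0 < (A n).2 := (hA.1 n).trans (hA.2.1 n).2.1
  have hgap : (A n).2 ≤ (A (n + 1)).1 := (hA.2.1 n).snd_le_fst_of_fst_lt (hA.2.1 (n + 1)) hlt
  rw [div_lt_div_iff₀ hbn hc₂] at hsmalln
  nlinarith [hccn.2, hccn'.1]

lemma AlmostDecr.snd_of_fst {E : Set ℝ} {A : ℕ → ℝ × ℝ}
    (hcomp : ∀ n, IsCompExt E (A n).1 (A n).2) (h : AlmostDecr fun n => (A n).1) :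
    AlmostDecr fun n => (A n).2 :=
  h.mono fun n hn => (hcomp (n + 1)).snd_le_snd_of_fst_le (hcomp n) hn

theorem stmt5_general (E : Set ℝ) (τ : ℕ → ℝ) (hτ : memE0d E τ)
    (A : ℕ → ℝ × ℝ) (hA : memIE E A) (heq : SeqEquiv (fun n => (A n).1) τ) :
    AlmostDecr (fun n => (A n).1) ∧ AlmostDecr (fun n => (A n).2) := by
  have hfst := hA.almostDecr_fst hτ.1 heq
  exact ⟨hfst, hfst.snd_of_fst hA.2.1⟩

theorem stmt5 (E : Set ℝ) (hE : E ⊆ Set.Ici 0) (τ : ℕ → ℝ) (hτ : memE0d E τ)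
    (A : ℕ → ℝ × ℝ) (hA : memIE E A) (heq : SeqEquiv (fun n => (A n).1) τ) :
    AlmostDecr (fun n => (A n).1) ∧ AlmostDecr (fun n => (A n).2) :=
  stmt5_general E τ hτ A hA heq
end

section
/- Let E ⊆ [0,∞), let τ̃ be an almost decreasing sequence in E∖{0} with limit 0, and let {(aₙ⁽¹⁾,bₙ⁽¹⁾)}, {(aₙ⁽²⁾,bₙ⁽²⁾)} ∈ Ĩ_E satisfy ã⁽¹⁾ ≍ τ̃ and ã⁽²⁾ ≍ τ̃. Then there exists N₀ such that (aₙ⁽¹⁾,bₙ⁽¹⁾) = (aₙ⁽²⁾,bₙ⁽²⁾) for all n ≥ N₀. -/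
open Filter Set Topology ENNReal

/-! Two components of the exterior of `E` that overlap coincide, since their union is again an
interval missing `E`. Both `a⁽¹⁾` and `a⁽²⁾` are `≍ τ̃`, so each is eventually at most a fixed
multiple `C` of the other; and `bₙ/aₙ → ∞` makes `C aₙ < bₙ` eventually. Hence
`aₙ⁽²⁾ < bₙ⁽¹⁾` and `aₙ⁽¹⁾ < bₙ⁽²⁾` for large `n`: the `n`-th components overlap. -/

theorem IsCompExt.eq_of_lt_of_lt {E : Set ℝ} {a b a' b' : ℝ}
    (h : IsCompExt E a b) (h' : IsCompExt E a' b') (ha' : a' < b) (ha : a < b') :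
    (a, b) = (a', b') := by
  obtain ⟨h0, -, hE, hmax⟩ := h
  obtain ⟨h0', -, hE', hmax'⟩ := h'
  have hunion : Ioo a b ∪ Ioo a' b' = Ioo (min a a') (max b b') := Ioo_union_Ioo' ha' ha
  have hunionE : Ioo (min a a') (max b b') ∩ E = ∅ := by
    rw [← hunion, union_inter_distrib_right, hE, hE', union_empty]
  have hmin : 0 ≤ min a a' := le_min h0 h0'
  have heq : (min a a', max b b') = (a, b) :=
    not_not.1 fun hne => hmax _ _ hmin (hunion ▸ subset_union_left) hne hunionE
  have heq' : (min a a', max b b') = (a', b') :=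
    not_not.1 fun hne => hmax' _ _ hmin (hunion ▸ subset_union_right) hne hunionE
  rw [← heq, heq']

theorem memIE.eventually_mul_fst_lt_snd {E : Set ℝ} {A : ℕ → ℝ × ℝ} (hA : memIE E A) (C : ℝ) :
    ∀ᶠ n in atTop, C * (A n).1 < (A n).2 := by
  obtain ⟨hpos, hcomp, -, hlim⟩ := hA
  have hratio : Tendsto (fun n => C * (1 - ((A n).2 - (A n).1) / (A n).2)) atTop (𝓝 0) := by
    simpa using ((tendsto_const_nhds (x := (1 : ℝ))).sub hlim).const_mul C
  filter_upwards [hratio.eventually_lt_const zero_lt_one] with n hn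
  have hb : 0 < (A n).2 := (hpos n).trans (hcomp n).2.1
  rwa [one_sub_div hb.ne', _root_.sub_sub_cancel, mul_div_assoc', div_lt_one hb] at hn

theorem SeqEquiv.exists_eventually_le_mul {a a' τ : ℕ → ℝ}
    (h : SeqEquiv a τ) (h' : SeqEquiv a' τ) : ∃ C : ℝ, ∀ᶠ n in atTop, a' n ≤ C * a n := by
  obtain ⟨_, c₂, _, _, hc⟩ := h
  obtain ⟨d₁, _, hd₁, _, hd⟩ := h'
  refine ⟨c₂ / d₁, ?_⟩
  filter_upwards [hc, hd] with n hcn hdn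
  rw [div_mul_eq_mul_div, le_div_iff₀ hd₁]
  linarith [hcn.2, hdn.1]

theorem stmt6_general (E : Set ℝ) (τ : ℕ → ℝ)
    (A₁ A₂ : ℕ → ℝ × ℝ) (hA₁ : memIE E A₁) (hA₂ : memIE E A₂)
    (h₁ : SeqEquiv (fun n => (A₁ n).1) τ) (h₂ : SeqEquiv (fun n => (A₂ n).1) τ) :
    ∃ N₀ : ℕ, ∀ n ≥ N₀, A₁ n = A₂ n := by
  obtain ⟨C₁, h21⟩ := h₁.exists_eventually_le_mul h₂
  obtain ⟨C₂, h12⟩ := h₂.exists_eventually_le_mul h₁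
  obtain ⟨N, hN⟩ := (h21.and <| h12.and <| (hA₁.eventually_mul_fst_lt_snd C₁).and
    (hA₂.eventually_mul_fst_lt_snd C₂)).exists_forall_of_atTop
  refine ⟨N, fun n hn => ?_⟩
  obtain ⟨h21n, h12n, hlt₁, hlt₂⟩ := hN n hn
  exact (hA₁.2.1 n).eq_of_lt_of_lt (hA₂.2.1 n) (h21n.trans_lt hlt₁) (h12n.trans_lt hlt₂)

theorem stmt6 (E : Set ℝ) (hE : E ⊆ Set.Ici 0) (τ : ℕ → ℝ) (hτ : memE0d E τ)
    (A₁ A₂ : ℕ → ℝ × ℝ) (hA₁ : memIE E A₁) (hA₂ : memIE E A₂)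
    (h₁ : SeqEquiv (fun n => (A₁ n).1) τ) (h₂ : SeqEquiv (fun n => (A₂ n).1) τ) :
    ∃ N₀ : ℕ, ∀ n ≥ N₀, A₁ n = A₂ n :=
  stmt6_general E τ A₁ A₂ hA₁ hA₂ h₁ h₂
end

section
/- Let E ⊆ [0,∞) be completely strongly porous and let L̃ = {(lₙ,mₙ)} ∈ Ĩ_E^{sd} be universal. Then M(L̃) := limsup_{n→∞} lₙ/mₙ₊₁ < ∞. -/
open Filter Set Topology ENNReal

/-!
If `M(L̃) = ∞`, choose indices `nₖ` with `l_{nₖ} ≫ m_{nₖ+1}` and points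
`τₖ ∈ E ∩ [m_{nₖ+1}, 2 m_{nₖ+1})` with `τₖ₊₁ / τₖ → 0`. Complete strong porosity gives gaps
`(aₖ, bₖ)` with `aₖ ≍ τₖ`; the fast decay of `τ` makes `{aₖ}` almost decreasing and forces
`τₖ ≤ aₖ`, so universality gives `aₖ = l_{f(k)}`. But then `l_{nₖ+1} < aₖ < l_{nₖ}`, which an
eventually decreasing null sequence does not allow.
-/

lemma IsCompExt.le_or_le_of_mem {E : Set ℝ} {a b t : ℝ} (h : IsCompExt E a b) (ht : t ∈ E) :
    t ≤ a ∨ b ≤ t := by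
  by_contra! hab
  exact (Set.eq_empty_iff_forall_notMem.mp h.2.2.1) t ⟨⟨hab.1, hab.2⟩, ht⟩

lemma IsCompExt.exists_mem_Ico {E : Set ℝ} {a b d : ℝ} (h : IsCompExt E a b) (hd : b < d) :
    ∃ t ∈ E, b ≤ t ∧ t < d := by
  have hne : (Set.Ioo a d ∩ E).Nonempty :=
    Set.nonempty_iff_ne_empty.mpr <| h.2.2.2 a d h.1 (Set.Ioo_subset_Ioo le_rfl hd.le)
      fun heq => hd.ne' (Prod.ext_iff.mp heq).2
  obtain ⟨t, ht, htE⟩ := hne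
  exact ⟨t, htE, (h.le_or_le_of_mem htE).resolve_left ht.1.not_ge, ht.2⟩

namespace memIE

variable {E : Set ℝ} {A : ℕ → ℝ × ℝ}

lemma snd_pos (hA : memIE E A) (n : ℕ) : 0 < (A n).2 :=
  (hA.1 n).trans (hA.2.1 n).2.1

lemma tendsto_fst_div_snd_s10 (hA : memIE E A) :
    Tendsto (fun n => (A n).1 / (A n).2) atTop (𝓝 0) := by
  have h := hA.2.2.2.const_sub 1
  rw [sub_self] at h
  refine h.congr fun n => ?_
  field_simp [(hA.snd_pos n).ne']
  ring

lemma eventually_le_fst_of_seqEquiv {τ : ℕ → ℝ} (hA : memIE E A) (hτE : ∀ n, τ n ∈ E)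
    (hAτ : SeqEquiv (fun n => (A n).1) τ) : ∀ᶠ n in atTop, τ n ≤ (A n).1 := by
  obtain ⟨c₁, c₂, -, hc₂, hAτ⟩ := hAτ
  have hsmall : ∀ᶠ n in atTop, (A n).1 / (A n).2 < 1 / c₂ :=
    hA.tendsto_fst_div_snd_s10.eventually (gt_mem_nhds (by positivity))
  filter_upwards [hsmall, hAτ] with n hn hτn
  refine ((hA.2.1 n).le_or_le_of_mem (hτE n)).resolve_right fun hbτ => hn.not_ge ?_
  rw [div_le_div_iff₀ hc₂ (hA.snd_pos n)]
  linarith [hτn.2]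

end memIE

lemma almostDecr_of_seqEquiv {a τ : ℕ → ℝ} (hτ : ∀ n, 0 < τ n)
    (hratio : Tendsto (fun n => τ (n + 1) / τ n) atTop (𝓝 0)) (haτ : SeqEquiv a τ) :
    AlmostDecr a := by
  obtain ⟨c₁, c₂, hc₁, hc₂, haτ⟩ := haτ
  have hsmall : ∀ᶠ n in atTop, τ (n + 1) / τ n < c₁ / c₂ :=
    hratio.eventually (gt_mem_nhds (by positivity))
  filter_upwards [hsmall, haτ, (tendsto_add_atTop_nat 1).eventually haτ] with n hn han han'
  rw [div_lt_div_iff₀ (hτ n) hc₂] at hn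
  have : c₁ * c₂ * a (n + 1) < c₁ * c₂ * a n := by
    nlinarith [mul_le_mul_of_nonneg_left han'.1 hc₂.le, mul_le_mul_of_nonneg_left han.2 hc₁.le]
  exact le_of_mul_le_mul_left this.le (by positivity)

lemma AlmostDecr.eventually_forall_notMem_Ioo {l : ℕ → ℝ} (hl : AlmostDecr l)
    (hpos : ∀ n, 0 < l n) (hl0 : Tendsto l atTop (𝓝 0)) :
    ∀ᶠ n in atTop, ∀ m, l m ∉ Set.Ioo (l (n + 1)) (l n) := by
  obtain ⟨N, hN⟩ := eventually_atTop.mp hl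
  have hanti : AntitoneOn l (Set.Ici N) := antitoneOn_nat_Ici_of_succ_le hN
  have hbelow : ∀ᶠ n in atTop, ∀ m ∈ Set.Iio N, l n < l m :=
    (eventually_all_finite (Set.finite_Iio N)).mpr fun m _ =>
      hl0.eventually (gt_mem_nhds (hpos m))
  filter_upwards [hbelow, eventually_ge_atTop N] with n hn hNn m ⟨hlm, hml⟩
  rcases lt_or_ge m N with hm | hm
  · exact (hn m hm).not_gt hml
  rcases le_or_gt m n with hmn | hnm
  · exact (hanti hm hNn hmn).not_gt hml
  · exact (hanti (Set.mem_Ici.mpr (hNn.trans n.le_succ)) hm hnm).not_gt hlm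

lemma exists_seq_forall_and_mul_lt {P : ℕ → ℕ → Prop} {s c : ℕ → ℝ}
    (h : ∀ k ε, 0 < ε → ∃ n, P k n ∧ s n < ε) (hs : ∀ n, 0 < s n) (hc : ∀ k, 0 < c k) :
    ∃ φ : ℕ → ℕ, (∀ k, P k (φ k)) ∧ ∀ k, c k * s (φ (k + 1)) < s (φ k) := by
  choose next hnext using fun k m => h (k + 1) (s m / c k) (div_pos (hs m) (hc k))
  obtain ⟨n₀, hn₀, -⟩ := h 0 1 one_pos
  let φ : ℕ → ℕ := fun k => Nat.rec n₀ (fun k m => next k m) k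
  refine ⟨φ, fun k => ?_, fun k => ?_⟩
  · cases k
    exacts [hn₀, (hnext _ _).1]
  · rw [mul_comm, ← lt_div_iff₀ (hc k)]
    exact (hnext k (φ k)).2

lemma Mq_lt_top_of_eventually_le {L : ℕ → ℝ × ℝ} {C : ℝ} (hr : ∀ n, 0 < (L n).2)
    (h : ∀ᶠ n in atTop, (L n).1 ≤ C * (L (n + 1)).2) : Mq L < ⊤ :=
  (limsup_le_of_le (by isBoundedDefault)
    (h.mono fun n hn => ENNReal.ofReal_le_ofReal ((div_le_iff₀ (hr _)).mpr hn))).trans_lt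
    ENNReal.ofReal_lt_top

lemma memIE.exists_rapidly_decreasing_seq {E : Set ℝ} {L : ℕ → ℝ × ℝ} (hL : memIE E L)
    (hfreq : ∀ C : ℝ, ∃ᶠ n in atTop, C * (L (n + 1)).2 < (L n).1) :
    ∃ (τ : ℕ → ℝ) (φ : ℕ → ℕ), memE0d E τ ∧ Tendsto (fun k => τ (k + 1) / τ k) atTop (𝓝 0) ∧
      Tendsto φ atTop atTop ∧ (∀ k, (L (φ k + 1)).1 < τ k) ∧
      Tendsto (fun k => τ k / (L (φ k)).1) atTop (𝓝 0) := by
  have hrpos := hL.snd_pos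
  obtain ⟨hlpos, hcomp, hl0, -⟩ := hL
  choose t htE hrt htr using fun n => (hcomp n).exists_mem_Ico (lt_two_mul_self (hrpos n))
  have hchoice : ∀ (k : ℕ) ε, 0 < ε → ∃ n, (k ≤ n ∧ ((k : ℝ) + 1) * (L (n + 1)).2 < (L n).1) ∧
      (L (n + 1)).2 < ε := by
    intro k ε hε
    obtain ⟨n, hn, hkn, hlε⟩ := ((hfreq (k + 1)).and_eventually
      ((eventually_ge_atTop k).and (hl0.eventually (gt_mem_nhds hε)))).exists
    refine ⟨n, ⟨hkn, hn⟩, ?_⟩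
    nlinarith [hrpos (n + 1), (Nat.cast_nonneg k : (0 : ℝ) ≤ k)]
  obtain ⟨φ, hφ, hφdec⟩ := exists_seq_forall_and_mul_lt (c := fun k => (k : ℝ) + 1) hchoice
    (fun n => hrpos (n + 1)) fun k => by positivity
  set τ : ℕ → ℝ := fun k => t (φ k + 1)
  have hτpos : ∀ k, 0 < τ k := fun k => (hrpos _).trans_le (hrt _)
  have hinv : Tendsto (fun k : ℕ => 2 / ((k : ℝ) + 1)) atTop (𝓝 0) := by
    simpa [div_eq_mul_inv] using tendsto_one_div_add_atTop_nhds_zero_nat.const_mul (2 : ℝ)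
  have hratio : Tendsto (fun k => τ (k + 1) / τ k) atTop (𝓝 0) := by
    refine squeeze_zero (fun k => (div_pos (hτpos _) (hτpos k)).le) (fun k => ?_) hinv
    rw [div_le_div_iff₀ (hτpos k) (by positivity)]
    nlinarith [htr (φ (k + 1) + 1), hrt (φ k + 1), hφdec k]
  have hτl : Tendsto (fun k => τ k / (L (φ k)).1) atTop (𝓝 0) := by
    refine squeeze_zero (fun k => (div_pos (hτpos k) (hlpos _)).le) (fun k => ?_) hinv
    rw [div_le_div_iff₀ (hlpos _) (by positivity)]
    nlinarith [htr (φ k + 1), (hφ k).2, hrpos (φ k + 1)]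
  have hφtop : Tendsto φ atTop atTop := tendsto_atTop_mono (fun k => (hφ k).1) tendsto_id
  have hτ0 : Tendsto τ atTop (𝓝 0) := by
    simpa using (hτl.mul (hl0.comp hφtop)).congr fun k => div_mul_cancel₀ _ (hlpos (φ k)).ne'
  refine ⟨τ, φ, ⟨?_, hτ0, fun k => ⟨htE _, (hτpos k).ne'⟩⟩, hratio, hφtop,
    fun k => ((hcomp _).2.1).trans_le (hrt _), hτl⟩
  exact almostDecr_of_seqEquiv hτpos hratio ⟨1, 1, one_pos, one_pos, .of_forall fun k => by simp⟩

theorem stmt10_general (E : Set ℝ) (hCSP : CSP E) (L : ℕ → ℝ × ℝ)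
    (hL : memIEsd E L) (hUniv : Universal E L) :
    Mq L < ⊤ := by
  by_contra hM
  have hfreq : ∀ C : ℝ, ∃ᶠ n in atTop, C * (L (n + 1)).2 < (L n).1 := fun C => by
    by_contra h
    exact hM (Mq_lt_top_of_eventually_le hL.1.snd_pos
      ((not_frequently.mp h).mono fun n hn => not_lt.mp hn))
  obtain ⟨τ, φ, hτ, hratio, hφ, hτlow, hτl⟩ := hL.1.exists_rapidly_decreasing_seq hfreq
  have hτpos : ∀ k, 0 < τ k := fun k => (hL.1.1 _).trans (hτlow k)
  obtain ⟨A, hA, hAτ⟩ := hCSP τ hτ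
  obtain ⟨N, f, hf⟩ := hUniv A ⟨hA, almostDecr_of_seqEquiv hτpos hratio hAτ⟩
  have hLdecr : AlmostDecr fun n => (L n).1 := hL.2.mono fun _ hn => hn.le
  have hgap := hLdecr.eventually_forall_notMem_Ioo hL.1.1 hL.1.2.2.1
  have hτA := hA.eventually_le_fst_of_seqEquiv (fun k => (hτ.2.2 k).1) hAτ
  obtain ⟨c₁, c₂, hc₁, -, hbounds⟩ := hAτ
  obtain ⟨k, hkN, hgapk, hτAk, hAτk, hτlk⟩ := ((eventually_ge_atTop N).and
    ((hφ.eventually hgap).and (hτA.and (hbounds.and (hτl.eventually (gt_mem_nhds hc₁)))))).exists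
  rw [div_lt_iff₀ (hL.1.1 _)] at hτlk
  refine hgapk (f k) ⟨?_, ?_⟩ <;> rw [← hf k hkN]
  · exact (hτlow k).trans_le hτAk
  · nlinarith [hAτk.1]

theorem stmt10 (E : Set ℝ) (hE : E ⊆ Set.Ici 0) (hCSP : CSP E) (L : ℕ → ℝ × ℝ)
    (hL : memIEsd E L) (hUniv : Universal E L) :
    Mq L < ⊤ :=
  stmt10_general E hCSP L hL hUniv
end

section
/- Let E = ⋃_{n∈ℕ} [x_{2n+1}, x_{2n}] where {xₙ} is a strictly decreasing sequence of positive reals with x_{n+1}/xₙ → 0. Then E is not completely strongly porous, yet the sequence {(x_{2n}, x_{2n−1})}_{n∈ℕ} belongs to Ĩ_E^{sd} and is universal. -/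
open Filter Set Topology ENNReal

section Aux

variable {x : ℕ → ℝ}

lemma aux_tendsto0 (hpos : ∀ n, 0 < x n) (hdec : StrictAnti x)
    (hratio : Filter.Tendsto (fun n => x (n + 1) / x n) Filter.atTop (nhds 0)) :
    Filter.Tendsto x Filter.atTop (nhds 0) := by
  have hbdd : BddBelow (Set.range x) := ⟨0, by rintro _ ⟨n, rfl⟩; exact (hpos n).le⟩
  have hlim := tendsto_atTop_ciInf hdec.antitone hbdd
  set l := ⨅ n, x n with hl
  have hl0 : 0 ≤ l := le_ciInf fun n => (hpos n).le
  rcases hl0.eq_or_lt with h | h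
  · rwa [← h] at hlim
  · exfalso
    have h1 : Filter.Tendsto (fun n => x (n + 1)) Filter.atTop (nhds l) :=
      hlim.comp (tendsto_add_atTop_nat 1)
    have h2 : Filter.Tendsto (fun n => x (n + 1) / x n) Filter.atTop (nhds (l / l)) :=
      h1.div hlim (ne_of_gt h)
    rw [div_self (ne_of_gt h)] at h2
    exact zero_ne_one (tendsto_nhds_unique hratio h2)

lemma comp_char (hpos : ∀ n, 0 < x n) (hdec : StrictAnti x)
    (hx0 : Filter.Tendsto x Filter.atTop (nhds 0))
    {E : Set ℝ} (hE : E = ⋃ n : ℕ, Set.Icc (x (2 * n + 1)) (x (2 * n)))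
    {a b : ℝ} : IsCompExt E a b ↔ ∃ k, a = x (2 * k + 2) ∧ b = x (2 * k + 1) := by
  have hmem : ∀ t : ℝ, t ∈ E ↔ ∃ j, x (2 * j + 1) ≤ t ∧ t ≤ x (2 * j) := by
    intro t; simp [hE, Set.mem_iUnion, Set.mem_Icc]
  have hanti := hdec.antitone
  constructor
  · rintro ⟨ha0, hab, hdisj, hmax⟩
    have hdisj' : ∀ t, a < t → t < b → t ∉ E := fun t h1 h2 ht =>
      Set.eq_empty_iff_forall_notMem.mp hdisj t ⟨⟨h1, h2⟩, ht⟩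
    -- a > 0
    have hapos : 0 < a := by
      rcases ha0.eq_or_lt with h | h
      · exfalso
        have hb : (0:ℝ) < b := by rw [← h] at hab; exact hab
        obtain ⟨N, hN⟩ := (hx0.eventually (gt_mem_nhds hb)).exists
        refine hdisj' (x (2 * N)) ?_ ?_ ((hmem _).mpr ⟨N, (hdec (by omega)).le, le_rfl⟩)
        · rw [← h]; exact hpos _
        · exact lt_of_le_of_lt (hanti (by omega)) hN
      · exact h
    -- a < x 0
    have halt : a < x 0 := by
      by_contra hcon
      push_neg at hcon
      refine hmax a (b + 1) ha0 (Set.Ioo_subset_Ioo_right (by linarith)) (by simp) ?_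
      rw [Set.eq_empty_iff_forall_notMem]
      rintro t ⟨⟨ht1, _⟩, ht⟩
      obtain ⟨j, _, hj2⟩ := (hmem t).mp ht
      have : x (2 * j) ≤ x 0 := hanti (by omega)
      linarith
    -- minimal index with x m ≤ a
    have hex : ∃ m, x m ≤ a := by
      obtain ⟨N, hN⟩ := (hx0.eventually (gt_mem_nhds hapos)).exists
      exact ⟨N, hN.le⟩
    set m₀ := Nat.find hex with hm₀
    have hfind : x m₀ ≤ a := Nat.find_spec hex
    have hltm : ∀ m < m₀, a < x m := fun m hm => lt_of_not_ge (Nat.find_min hex hm)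
    have hm0ne : m₀ ≠ 0 := by
      intro h
      have := hfind; rw [h] at this; linarith
    rcases Nat.even_or_odd m₀ with ⟨r, hr⟩ | ⟨r, hr⟩
    · -- m₀ even, = 2k'+2
      obtain ⟨k, hk⟩ : ∃ k, m₀ = 2 * k + 2 := ⟨r - 1, by omega⟩
      have h1 : x (2 * k + 2) ≤ a := by rw [← hk]; exact hfind
      have h2 : a < x (2 * k + 1) := hltm _ (by omega)
      -- a = x (2k+2)
      have hae : a = x (2 * k + 2) := by
        rcases h1.eq_or_lt with h | h
        · exact h.symm
        · exfalso
          have := hmax (x (2 * k + 2)) b (hpos _).le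
            (Set.Ioo_subset_Ioo_left h.le) (by simp; intro hc; linarith)
          obtain ⟨t, ⟨ht1, ht2⟩, ht⟩ := Set.nonempty_iff_ne_empty.mpr this
          obtain ⟨j, hj1, hj2⟩ := (hmem t).mp ht
          have hta : a < t := by
            rcases le_or_gt j k with hjk | hjk
            · have : x (2 * k + 1) ≤ x (2 * j + 1) := hanti (by omega)
              linarith
            · have : x (2 * j) ≤ x (2 * k + 2) := hanti (by omega)
              linarith
          exact hdisj' t hta ht2 ht
      -- b ≤ x (2k+1)
      have hble : b ≤ x (2 * k + 1) := by
        by_contra hcon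
        push_neg at hcon
        exact hdisj' (x (2 * k + 1)) (by linarith) hcon
          ((hmem _).mpr ⟨k, le_rfl, (hdec (by omega)).le⟩)
      have hbe : b = x (2 * k + 1) := by
        rcases hble.eq_or_lt with h | h
        · exact h
        · exfalso
          have := hmax a (x (2 * k + 1)) ha0
            (Set.Ioo_subset_Ioo_right hble) (by simp; intro hc; linarith)
          obtain ⟨t, ⟨ht1, ht2⟩, ht⟩ := Set.nonempty_iff_ne_empty.mpr this
          obtain ⟨j, hj1, hj2⟩ := (hmem t).mp ht
          rcases le_or_gt j k with hjk | hjk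
          · have : x (2 * k + 1) ≤ x (2 * j + 1) := hanti (by omega)
            linarith
          · have : x (2 * j) ≤ x (2 * k + 2) := hanti (by omega)
            rw [hae] at ht1; linarith
      exact ⟨k, hae, hbe⟩
    · -- m₀ odd: impossible
      exfalso
      have h1 : x (2 * r + 1) ≤ a := by rw [show 2 * r + 1 = m₀ by omega]; exact hfind
      have h2 : a < x (2 * r) := hltm _ (by omega)
      set t := (a + min b (x (2 * r))) / 2 with htdef
      have hmin : a < min b (x (2 * r)) := lt_min hab h2
      have hta : a < t := by simp only [htdef]; linarith
      have htb : t < b := by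
        have : t < min b (x (2 * r)) := by simp only [htdef]; linarith
        exact lt_of_lt_of_le this (min_le_left _ _)
      have htx : t < x (2 * r) := by
        have : t < min b (x (2 * r)) := by simp only [htdef]; linarith
        exact lt_of_lt_of_le this (min_le_right _ _)
      exact hdisj' t hta htb ((hmem t).mpr ⟨r, by linarith, htx.le⟩)
  · rintro ⟨k, rfl, rfl⟩
    refine ⟨(hpos _).le, hdec (by omega), ?_, ?_⟩
    · rw [Set.eq_empty_iff_forall_notMem]
      rintro t ⟨⟨ht1, ht2⟩, ht⟩
      obtain ⟨j, hj1, hj2⟩ := (hmem t).mp ht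
      rcases le_or_gt j k with hjk | hjk
      · have : x (2 * k + 1) ≤ x (2 * j + 1) := hanti (by omega)
        linarith
      · have : x (2 * j) ≤ x (2 * k + 2) := hanti (by omega)
        linarith
    · intro c d hc hsub hne
      have hord : c ≤ x (2 * k + 2) ∧ x (2 * k + 1) ≤ d :=
        (Set.Ioo_subset_Ioo_iff (hdec (by omega : 2 * k + 1 < 2 * k + 2))).mp hsub
      rw [← Set.nonempty_iff_ne_empty]
      rcases hord.1.eq_or_lt with h | h
      · rcases hord.2.eq_or_lt with h' | h'
        · exact absurd (by rw [Prod.mk.injEq]; exact ⟨h, h'.symm⟩) hne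
        · exact ⟨x (2 * k + 1), ⟨lt_of_le_of_lt hord.1 (hdec (by omega)), h'⟩,
            (hmem _).mpr ⟨k, le_rfl, (hdec (by omega)).le⟩⟩
      · exact ⟨x (2 * k + 2), ⟨h, lt_of_lt_of_le (hdec (by omega)) hord.2⟩,
          (hmem _).mpr ⟨k + 1, by constructor <;> [exact (hdec (by omega)).le; rfl] ⟩⟩

end Aux

theorem stmt12 (x : ℕ → ℝ) (hpos : ∀ n, 0 < x n) (hdec : StrictAnti x)
    (hratio : Filter.Tendsto (fun n => x (n + 1) / x n) Filter.atTop (nhds 0))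
    (E : Set ℝ) (hEdef : E = ⋃ n : ℕ, Set.Icc (x (2 * n + 1)) (x (2 * n))) :
    ¬ CSP E ∧ memIEsd E (fun n => (x (2 * n + 2), x (2 * n + 1))) ∧
      Universal E (fun n => (x (2 * n + 2), x (2 * n + 1))) := by
  have hanti := hdec.antitone
  have hx0 : Filter.Tendsto x Filter.atTop (nhds 0) := aux_tendsto0 hpos hdec hratio
  have hchar : ∀ a b : ℝ, IsCompExt E a b ↔ ∃ k, a = x (2 * k + 2) ∧ b = x (2 * k + 1) :=
    fun a b => comp_char hpos hdec hx0 hEdef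
  have hmem : ∀ t : ℝ, t ∈ E ↔ ∃ j, x (2 * j + 1) ≤ t ∧ t ≤ x (2 * j) := by
    intro t; simp [hEdef, Set.mem_iUnion, Set.mem_Icc]
  have htwo : Filter.Tendsto (fun n : ℕ => 2 * n) Filter.atTop Filter.atTop :=
    Filter.tendsto_atTop_atTop.mpr fun b => ⟨b, fun a ha => by omega⟩
  have htwo1 : Filter.Tendsto (fun n : ℕ => 2 * n + 1) Filter.atTop Filter.atTop :=
    Filter.tendsto_atTop_atTop.mpr fun b => ⟨b, fun a ha => by omega⟩
  have htwo2 : Filter.Tendsto (fun n : ℕ => 2 * n + 2) Filter.atTop Filter.atTop :=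
    Filter.tendsto_atTop_atTop.mpr fun b => ⟨b, fun a ha => by omega⟩
  refine ⟨?_, ?_, ?_⟩
  · -- ¬ CSP
    intro hCSP
    set τ : ℕ → ℝ := fun n => Real.sqrt (x (2 * n + 1) * x (2 * n)) with hτ
    have hτmem : ∀ n, x (2 * n + 1) ≤ τ n ∧ τ n ≤ x (2 * n) := by
      intro n
      constructor
      · rw [hτ, show x (2 * n + 1) = Real.sqrt (x (2 * n + 1) * x (2 * n + 1)) from
          (Real.sqrt_mul_self (hpos _).le).symm]
        exact Real.sqrt_le_sqrt (mul_le_mul_of_nonneg_left (hanti (by omega)) (hpos _).le)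
      · rw [hτ, show x (2 * n) = Real.sqrt (x (2 * n) * x (2 * n)) from
          (Real.sqrt_mul_self (hpos _).le).symm]
        exact Real.sqrt_le_sqrt (mul_le_mul_of_nonneg_right (hanti (by omega)) (hpos _).le)
    have hτpos : ∀ n, 0 < τ n := fun n => lt_of_lt_of_le (hpos _) (hτmem n).1
    have hτE : memE0d E τ := by
      refine ⟨Filter.Eventually.of_forall fun n => ?_, ?_, fun n => ⟨(hmem _).mpr ⟨n, hτmem n⟩,
        (hτpos n).ne'⟩⟩
      · exact Real.sqrt_le_sqrt (mul_le_mul (hanti (by omega)) (hanti (by omega))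
          (hpos _).le (hpos _).le)
      · exact tendsto_of_tendsto_of_tendsto_of_le_of_le tendsto_const_nhds (hx0.comp htwo)
          (fun n => (hτpos n).le) (fun n => (hτmem n).2)
    obtain ⟨A, ⟨hApos, hAcomp, _, _⟩, c₁, c₂, hc₁, hc₂, hev⟩ := hCSP τ hτE
    have hrts : Filter.Tendsto (fun n => x (2 * n + 1) / x (2 * n)) Filter.atTop (nhds 0) :=
      hratio.comp htwo
    have hsm : ∀ᶠ n in Filter.atTop, x (2 * n + 1) / x (2 * n) < min (c₁ ^ 2) ((c₂ ^ 2)⁻¹) :=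
      hrts.eventually (gt_mem_nhds (lt_min (by positivity) (by positivity)))
    obtain ⟨n, ⟨hev1, hev2⟩, hsmn⟩ := (hev.and hsm).exists
    obtain ⟨k, hk1, _⟩ := (hchar _ _).mp (hAcomp n)
    have hτsq : τ n ^ 2 = x (2 * n + 1) * x (2 * n) := Real.sq_sqrt (mul_nonneg (hpos _).le (hpos _).le)
    rcases le_or_gt (k + 1) n with hkn | hkn
    · have hxa : x (2 * n) ≤ (A n).1 := hk1 ▸ hanti (by omega)
      have h1 : c₁ * x (2 * n) ≤ τ n := le_trans (by nlinarith) hev1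
      have h2 : c₁ ^ 2 * x (2 * n) ≤ x (2 * n + 1) := by
        nlinarith [mul_self_le_mul_self (mul_nonneg hc₁.le (hpos _).le) h1,
          hpos (2 * n), hpos (2 * n + 1)]
      have h3 : c₁ ^ 2 ≤ x (2 * n + 1) / x (2 * n) := (le_div_iff₀ (hpos _)).mpr h2
      have h4 := min_le_left (c₁ ^ 2) ((c₂ ^ 2)⁻¹)
      linarith
    · have hxa : (A n).1 ≤ x (2 * n + 1) := hk1 ▸ hanti (by omega)
      have h1 : τ n ≤ c₂ * x (2 * n + 1) := le_trans hev2 (by nlinarith)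
      have h2 : x (2 * n) ≤ c₂ ^ 2 * x (2 * n + 1) := by
        nlinarith [mul_self_le_mul_self (hτpos n).le h1, hpos (2 * n), hpos (2 * n + 1)]
      have hc2 : (0:ℝ) < c₂ ^ 2 := by positivity
      have h3 : (c₂ ^ 2)⁻¹ ≤ x (2 * n + 1) / x (2 * n) := by
        rw [le_div_iff₀ (hpos _), inv_mul_le_iff₀ hc2]
        linarith
      have h4 := min_le_right (c₁ ^ 2) ((c₂ ^ 2)⁻¹)
      linarith
  · -- memIEsd
    refine ⟨⟨fun n => hpos _, fun n => (hchar _ _).mpr ⟨n, rfl, rfl⟩, hx0.comp htwo2, ?_⟩,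
      Filter.Eventually.of_forall fun n => hdec (by omega)⟩
    have key : ∀ n : ℕ, (x (2 * n + 1) - x (2 * n + 2)) / x (2 * n + 1)
        = 1 - x (2 * n + 1 + 1) / x (2 * n + 1) := by
      intro n
      rw [sub_div, div_self (hpos _).ne']
    have h0 : Filter.Tendsto (fun n => x (2 * n + 1 + 1) / x (2 * n + 1)) Filter.atTop (nhds 0) :=
      hratio.comp htwo1
    have h1 : Filter.Tendsto (fun n => 1 - x (2 * n + 1 + 1) / x (2 * n + 1)) Filter.atTop
        (nhds 1) := by
      have := tendsto_const_nhds.sub h0 (f := fun _ : ℕ => (1:ℝ))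
      simpa using this
    simpa only [key] using h1
  · -- Universal
    intro A hA
    obtain ⟨⟨hApos, hAcomp, _, _⟩, _⟩ := hA
    choose f hf _ using fun n => (hchar _ _).mp (hAcomp n)
    exact ⟨0, f, fun n _ => hf n⟩
end
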